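/- arXiv:1703.10635 — 2 statements merged into one kernel-verified Lean document; each statement's English description precedes it below -/
import Mathlib

section
/- Let ℒ ⊂ ℝ^{n+1} be a lattice and y0 > 0. Let 𝓛̃ = P(ℒ) if (0,y0) ∈ ℒ, and 𝓛̃ = P(ℒ ∩ (ℝ^n × {0})) otherwise; let 𝓛̃* = {k̃ ∈ ℝ^n : ⟨k̃,v⟩ ∈ ℤ for all v ∈ 𝓛̃}, and let 𝒳_𝓛̃ be the ℂ-linear span of {ω_{k̃} : k̃ ∈ 𝓛̃*}. Then Π_{y0}(𝒳_ℒ) = 𝒳_𝓛̃ if and only if for each k̃ ∈ 𝓛̃* there exists z ∈ ℝ such that (k̃, z) ∈ ℒ* and z·y0 ∉ ℤ \ {0}. -/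
open MeasureTheory
open scoped Classical

noncomputable section

/-- The Euclidean dot product on `ℝⁿ`. -/
def dotn {n : ℕ} (a b : Fin n → ℝ) : ℝ := ∑ i, a i * b i

/-- `ℝ^{n+1}` viewed as `ℝⁿ × ℝ`, points written `(x, y)`. -/
abbrev V1 (n : ℕ) := (Fin n → ℝ) × ℝ

/-- The standard inner product on `ℝ^{n+1} = ℝⁿ × ℝ`. -/
def dot1 {n : ℕ} (k p : V1 n) : ℝ := dotn k.1 p.1 + k.2 * p.2

/-- `e^{2πit}`. -/
def expz (t : ℝ) : ℂ := Complex.exp (2 * (Real.pi : ℂ) * Complex.I * (t : ℂ))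

/-- The wave `ω_k` on `ℝ^{n+1}`. -/
def wave {n : ℕ} (k : V1 n) : V1 n → ℂ := fun p => expz (dot1 k p)

/-- The wave `ω_k̃` on `ℝⁿ`. -/
def waveN {n : ℕ} (k : Fin n → ℝ) : (Fin n → ℝ) → ℂ := fun x => expz (dotn k x)

/-- The projection operator `Π_{y0}`. -/
def Proj {n : ℕ} (y0 : ℝ) (f : V1 n → ℂ) : (Fin n → ℝ) → ℂ :=
  fun x => ∫ y in (0:ℝ)..y0, f (x, y)

/-- The lattice generated over `ℤ` by the vectors `b i`. -/
def latticeOf {n : ℕ} (b : Fin (n+1) → V1 n) : Set (V1 n) :=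
  {v | ∃ c : Fin (n+1) → ℤ, v = ∑ i, (c i : ℝ) • b i}

/-- The dual lattice `ℒ*` of a subset of `ℝ^{n+1}`. -/
def dualLat {n : ℕ} (L : Set (V1 n)) : Set (V1 n) :=
  {k | ∀ l ∈ L, ∃ m : ℤ, dot1 k l = (m : ℝ)}

/-- The dual lattice of a subset of `ℝⁿ`. -/
def dualN {n : ℕ} (Lt : Set (Fin n → ℝ)) : Set (Fin n → ℝ) :=
  {k | ∀ v ∈ Lt, ∃ m : ℤ, dotn k v = (m : ℝ)}

/-- `𝒳_ℒ`: the ℂ-linear span of the waves `ω_k`, `k ∈ ℒ*`. -/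
def XL {n : ℕ} (L : Set (V1 n)) : Submodule ℂ (V1 n → ℂ) :=
  Submodule.span ℂ (wave '' dualLat L)

/-- The ℂ-linear span of the waves `ω_k̃`, `k̃` in the dual of a planar lattice. -/
def XN {n : ℕ} (Lt : Set (Fin n → ℝ)) : Submodule ℂ ((Fin n → ℝ) → ℂ) :=
  Submodule.span ℂ (waveN '' dualN Lt)

/-- Membership in `O(n)`: a linear automorphism of `ℝⁿ` preserving the dot product. -/
def IsOrthoN {n : ℕ} (α : (Fin n → ℝ) ≃ₗ[ℝ] (Fin n → ℝ)) : Prop :=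
  ∀ a b, dotn (α a) (α b) = dotn a b

/-- Membership in `O(n+1)`: a linear automorphism of `ℝ^{n+1}` preserving the inner product. -/
def IsOrtho1 {n : ℕ} (δ : V1 n ≃ₗ[ℝ] V1 n) : Prop :=
  ∀ a b, dot1 (δ a) (δ b) = dot1 a b

/-- The holohedry `H_ℒ`: orthogonal transformations mapping `ℒ` to itself. -/
def HolL {n : ℕ} (L : Set (V1 n)) : Set (V1 n ≃ₗ[ℝ] V1 n) :=
  {γ | IsOrtho1 γ ∧ (⇑γ) '' L = L}

/-- `α₊`: acts as `α` on `ℝⁿ` and `+1` on the last coordinate. -/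
def aPlus {n : ℕ} (α : (Fin n → ℝ) ≃ₗ[ℝ] (Fin n → ℝ)) : V1 n ≃ₗ[ℝ] V1 n :=
  α.prodCongr (LinearEquiv.refl ℝ ℝ)

/-- `α₋`: acts as `α` on `ℝⁿ` and `−1` on the last coordinate. -/
def aMinus {n : ℕ} (α : (Fin n → ℝ) ≃ₗ[ℝ] (Fin n → ℝ)) : V1 n ≃ₗ[ℝ] V1 n :=
  α.prodCongr (LinearEquiv.neg ℝ)

/-- The group `J̃` of induced orthogonal symmetries. -/
def Jt {n : ℕ} (L : Set (V1 n)) (y0 : ℝ) : Set ((Fin n → ℝ) ≃ₗ[ℝ] (Fin n → ℝ)) :=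
  {α | IsOrthoN α ∧
    (aPlus α ∈ HolL L ∨ ((((0 : Fin n → ℝ), y0) : V1 n) ∈ L ∧ aMinus α ∈ HolL L))}

/-- The subset `J̃↑` of `H_ℒ`. -/
def Jup {n : ℕ} (L : Set (V1 n)) (y0 : ℝ) : Set (V1 n ≃ₗ[ℝ] V1 n) :=
  {γ | ∃ α ∈ Jt L y0,
    (γ = aPlus α ∧ aPlus α ∈ HolL L) ∨ (γ = aMinus α ∧ aMinus α ∈ HolL L)}

/-- The set `J^α_k = {δ ∈ H_ℒ : P(δk) = α k̃}`. -/
def Jset {n : ℕ} (L : Set (V1 n)) (k : V1 n) (α : (Fin n → ℝ) ≃ₗ[ℝ] (Fin n → ℝ)) :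
    Set (V1 n ≃ₗ[ℝ] V1 n) :=
  {δ ∈ HolL L | (δ k).1 = α k.1}

/-- The set `J^{Id}_k = {δ ∈ H_ℒ : P(δk) = k̃}`. -/
def JId {n : ℕ} (L : Set (V1 n)) (k : V1 n) : Set (V1 n ≃ₗ[ℝ] V1 n) :=
  {δ ∈ HolL L | (δ k).1 = k.1}

/-- The set `S_k = ⋃_{α ∈ J̃} J^α_k`. -/
def Sk {n : ℕ} (L : Set (V1 n)) (y0 : ℝ) (k : V1 n) : Set (V1 n ≃ₗ[ℝ] V1 n) :=
  ⋃ α ∈ Jt L y0, Jset L k α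

/-- The isotropy subgroup `Σ_k` of `k` in `H_ℒ`. -/
def Sigk {n : ℕ} (L : Set (V1 n)) (k : V1 n) : Set (V1 n ≃ₗ[ℝ] V1 n) :=
  {δ ∈ HolL L | δ k = k}

/-- The orbit `H_ℒ·k`. -/
def HOrb {n : ℕ} (L : Set (V1 n)) (k : V1 n) : Set (V1 n) :=
  (fun δ : V1 n ≃ₗ[ℝ] V1 n => δ k) '' HolL L

/-- The orbit `J̃·u`. -/
def JOrb {n : ℕ} (L : Set (V1 n)) (y0 : ℝ) (u : Fin n → ℝ) : Set (Fin n → ℝ) :=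
  (fun α : (Fin n → ℝ) ≃ₗ[ℝ] (Fin n → ℝ) => α u) '' Jt L y0

/-- The single mode `V`: the ℂ-span of the waves `ω_{δk}`, `δ ∈ H_ℒ`. -/
def modeV {n : ℕ} (L : Set (V1 n)) (k : V1 n) : Submodule ℂ (V1 n → ℂ) :=
  Submodule.span ℂ ((fun δ : V1 n ≃ₗ[ℝ] V1 n => wave (δ k)) '' HolL L)

/-- The projected lattice `𝓛̃`. -/
def projLat {n : ℕ} (L : Set (V1 n)) (y0 : ℝ) : Set (Fin n → ℝ) :=
  if (((0 : Fin n → ℝ), y0) : V1 n) ∈ L then Prod.fst '' L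
  else Prod.fst '' (L ∩ {p : V1 n | p.2 = 0})

/-!
A wave `ω_(k̃,z)` projects to `(∫₀^{y0} e^{2πizy} dy) • ω_k̃`, and this coefficient vanishes exactly
when `z·y0 ∈ ℤ \ {0}`. Hence `Π_{y0}(𝒳_ℒ)` is spanned by the waves `ω_k̃` for which some lift
`(k̃, z) ∈ ℒ*` has `z·y0 ∉ ℤ \ {0}`; every such `k̃` lies in `𝓛̃*`. Since distinct waves are
linearly independent, this span equals `𝒳_𝓛̃` exactly when every `k̃ ∈ 𝓛̃*` admits such a lift.
-/

lemma expz_add (s t : ℝ) : expz (s + t) = expz s * expz t := by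
  simp only [expz, ← Complex.exp_add, Complex.ofReal_add]
  ring_nf

lemma expz_eq_one_iff (t : ℝ) : expz t = 1 ↔ ∃ m : ℤ, t = m := by
  have h2πi : 2 * (Real.pi : ℂ) * Complex.I ≠ 0 := by simp [Real.pi_ne_zero]
  simp only [expz, Complex.exp_eq_one_iff]
  refine exists_congr fun m => ⟨fun h => ?_, fun h => by rw [h]; push_cast; ring⟩
  have h' : 2 * (Real.pi : ℂ) * Complex.I * t = 2 * Real.pi * Complex.I * m :=
    h.trans (mul_comm _ _)
  exact_mod_cast mul_left_cancel₀ h2πi h'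

lemma expz_eq_expz_iff (s t : ℝ) : expz s = expz t ↔ ∃ m : ℤ, s - t = m := by
  rw [← expz_eq_one_iff, ← mul_eq_right₀ (b := expz t) (Complex.exp_ne_zero _), ← expz_add,
    sub_add_cancel]

lemma eq_zero_of_forall_mul_mem_int {c : ℝ} (h : ∀ t : ℝ, ∃ m : ℤ, c * t = m) : c = 0 := by
  by_contra hc
  obtain ⟨m, hm⟩ := h (1 / (2 * c))
  have : ((2 * m : ℤ) : ℝ) = 1 := by
    push_cast
    rw [← hm]
    field_simp
  have : 2 * m = 1 := by exact_mod_cast this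
  omega

section Waves

variable {n : ℕ}

lemma dotn_add_right (u a b : Fin n → ℝ) : dotn u (a + b) = dotn u a + dotn u b := by
  simp only [dotn, Pi.add_apply, mul_add, Finset.sum_add_distrib]

lemma dotn_single (u : Fin n → ℝ) (i : Fin n) (t : ℝ) : dotn u (Pi.single i t) = u i * t := by
  simp [dotn, Pi.single_apply]

def waveHom (k : Fin n → ℝ) : Multiplicative (Fin n → ℝ) →* ℂ where
  toFun x := waveN k x.toAdd
  map_one' := by simp [waveN, dotn, expz]
  map_mul' x y := by simp only [waveN, toAdd_mul, dotn_add_right, expz_add]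

lemma waveHom_injective : Function.Injective (waveHom (n := n)) := by
  intro u u' h
  funext i
  rw [← sub_eq_zero]
  refine eq_zero_of_forall_mul_mem_int fun t => ?_
  have := DFunLike.congr_fun h (Multiplicative.ofAdd (Pi.single i t))
  simp only [waveHom, MonoidHom.coe_mk, OneHom.coe_mk, toAdd_ofAdd, waveN, dotn_single,
    expz_eq_expz_iff] at this
  simpa only [sub_mul] using this

lemma linearIndependent_waveN : LinearIndependent ℂ (waveN (n := n)) :=
  (linearIndependent_monoidHom (Multiplicative (Fin n → ℝ)) ℂ).comp waveHom waveHom_injective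

end Waves

theorem LinearIndependent.span_image_le_span_image_iff {ι R M : Type*} [Ring R] [Nontrivial R]
    [AddCommGroup M] [Module R M] {v : ι → M} (hv : LinearIndependent R v) {s t : Set ι} :
    Submodule.span R (v '' s) ≤ Submodule.span R (v '' t) ↔ s ⊆ t := by
  refine ⟨fun h i hi => ?_, fun h => Submodule.span_mono (Set.image_mono h)⟩
  by_contra hit
  exact hv.notMem_span_image hit (h (Submodule.subset_span (Set.mem_image_of_mem v hi)))

theorem Submodule.span_image_smul {ι K M : Type*} [Field K] [AddCommGroup M] [Module K M]
    (c : ι → K) (v : ι → M) (s : Set ι) :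
    span K ((fun i => c i • v i) '' s) = span K (v '' {i ∈ s | c i ≠ 0}) := by
  refine le_antisymm (span_le.2 ?_) (span_le.2 ?_)
  · rintro _ ⟨i, hi, rfl⟩
    by_cases hc : c i = 0
    · simp [hc]
    · exact smul_mem _ _ (subset_span ⟨i, ⟨hi, hc⟩, rfl⟩)
  · rintro _ ⟨i, ⟨hi, hc⟩, rfl⟩
    rw [SetLike.mem_coe, ← inv_smul_smul₀ hc (v i)]
    exact smul_mem _ _ (subset_span ⟨i, hi, rfl⟩)

lemma integral_expz_mul_of_ne_zero (y0 : ℝ) {z : ℝ} (hz : z ≠ 0) :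
    ∫ y in (0:ℝ)..y0, expz (z * y) = (expz (z * y0) - 1) / (2 * Real.pi * Complex.I * z) := by
  have hc : 2 * (Real.pi : ℂ) * Complex.I * z ≠ 0 := by simp [Real.pi_ne_zero, hz]
  simp only [expz, Complex.ofReal_mul, ← mul_assoc]
  simpa using integral_exp_mul_complex (a := 0) (b := y0) hc

lemma integral_expz_mul_ne_zero_iff {y0 : ℝ} (hy0 : 0 < y0) (z : ℝ) :
    ∫ y in (0:ℝ)..y0, expz (z * y) ≠ 0 ↔ ∀ m : ℤ, z * y0 = m → m = 0 := by
  rcases eq_or_ne z 0 with rfl | hz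
  · simp [expz, hy0.ne', eq_comm (a := (0 : ℝ))]
  · have hzy : z * y0 ≠ 0 := mul_ne_zero hz hy0.ne'
    rw [integral_expz_mul_of_ne_zero y0 hz, div_ne_zero_iff, sub_ne_zero, ne_eq, expz_eq_one_iff]
    simp only [ne_eq, mul_eq_zero, OfNat.ofNat_ne_zero, Complex.ofReal_eq_zero, Real.pi_ne_zero,
      Complex.I_ne_zero, hz, or_self, not_false_eq_true, and_true, not_exists]
    refine forall_congr' fun m => ⟨fun h hm => absurd hm h, fun h hm => hzy ?_⟩
    rw [hm, h hm, Int.cast_zero]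

section Projection

variable {n : ℕ} (y0 : ℝ)

def fiberIntegrable : Submodule ℂ (V1 n → ℂ) where
  carrier := {f | ∀ x, IntervalIntegrable (fun y => f (x, y)) volume 0 y0}
  add_mem' hf hg x := (hf x).add (hg x)
  zero_mem' _ := intervalIntegrable_const
  smul_mem' c _ hf x := (hf x).const_mul c

def projₗ : fiberIntegrable (n := n) y0 →ₗ[ℂ] ((Fin n → ℝ) → ℂ) where
  toFun f := Proj y0 f
  map_add' f g := funext fun x => intervalIntegral.integral_add (f.2 x) (g.2 x)
  map_smul' c _ := funext fun _ => intervalIntegral.integral_const_mul c _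

theorem image_Proj_span {s : Set (V1 n → ℂ)}
    (hs : s ⊆ (fiberIntegrable (n := n) y0 : Set (V1 n → ℂ))) :
    Proj y0 '' Submodule.span ℂ s = (Submodule.span ℂ (Proj y0 '' s) : Set ((Fin n → ℝ) → ℂ)) := by
  set F := fiberIntegrable (n := n) y0
  have hs' : F.subtype '' (F.subtype ⁻¹' s) = s :=
    Set.image_preimage_eq_of_subset (by rwa [Submodule.coe_subtype, Subtype.range_coe_subtype])
  have hproj : Proj y0 ∘ F.subtype = projₗ y0 := rfl
  rw [← hs', ← Submodule.map_span, Submodule.map_coe, ← Set.image_comp, hproj, ← Submodule.map_coe,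
    Submodule.map_span, ← hproj, Set.image_comp, hs']

lemma wave_mem_fiberIntegrable (k : V1 n) : wave k ∈ fiberIntegrable y0 := fun x =>
  Continuous.intervalIntegrable (by unfold wave expz dot1 dotn; fun_prop) _ _

lemma Proj_wave (k : V1 n) :
    Proj y0 (wave k) = (∫ y in (0:ℝ)..y0, expz (k.2 * y)) • waveN k.1 := by
  funext x
  simp only [Proj, wave, waveN, dot1, expz_add, Pi.smul_apply, smul_eq_mul,
    intervalIntegral.integral_const_mul, mul_comm]

theorem image_Proj_XL {y0 : ℝ} (hy0 : 0 < y0) (L : Set (V1 n)) :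
    Proj y0 '' (XL L : Set (V1 n → ℂ)) = Submodule.span ℂ
      (waveN '' {kt | ∃ z : ℝ, ((kt, z) : V1 n) ∈ dualLat L ∧ ∀ m : ℤ, z * y0 = m → m = 0}) := by
  rw [XL, image_Proj_span y0 (Set.image_subset_iff.2 fun k _ => wave_mem_fiberIntegrable y0 k),
    ← Set.image_comp, Function.comp_def]
  simp only [Proj_wave]
  rw [Submodule.span_image_smul, ← Set.image_image waveN Prod.fst]
  congr 2
  ext kt
  simp [integral_expz_mul_ne_zero_iff hy0]

end Projection

lemma mem_dualN_projLat {n : ℕ} {L : Set (V1 n)} {y0 : ℝ} (hy0 : 0 < y0) {kt : Fin n → ℝ} {z : ℝ}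
    (hk : ((kt, z) : V1 n) ∈ dualLat L) (hz : ∀ m : ℤ, z * y0 = m → m = 0) :
    kt ∈ dualN (projLat L y0) := by
  have hlift : ∀ l ∈ L, z * l.2 = 0 → ∃ m : ℤ, dotn kt l.1 = m := fun l hl h0 => by
    simpa [dot1, h0] using hk l hl
  unfold projLat
  split_ifs with h0
  · obtain ⟨m, hm⟩ := hk _ h0
    have hzy : z * y0 = m := by simpa [dot1, dotn] using hm
    rw [hz m hzy, Int.cast_zero] at hzy
    have hz0 : z = 0 := (mul_eq_zero.1 hzy).resolve_right hy0.ne'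
    rintro _ ⟨l, hl, rfl⟩
    exact hlift l hl (by rw [hz0, zero_mul])
  · rintro _ ⟨l, ⟨hl, hl2⟩, rfl⟩
    exact hlift l hl (by rw [show l.2 = 0 from hl2, mul_zero])

theorem stmt_5_general (n : ℕ) (b : Fin (n+1) → V1 n)
    (y0 : ℝ) (hy0 : 0 < y0) :
    Proj y0 '' (XL (latticeOf b) : Set (V1 n → ℂ)) =
        (XN (projLat (latticeOf b) y0) : Set ((Fin n → ℝ) → ℂ)) ↔
      ∀ kt ∈ dualN (projLat (latticeOf b) y0),
        ∃ z : ℝ, ((kt, z) : V1 n) ∈ dualLat (latticeOf b) ∧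
          ∀ m : ℤ, z * y0 = (m : ℝ) → m = 0 := by
  rw [image_Proj_XL hy0, XN, SetLike.coe_set_eq, le_antisymm_iff,
    linearIndependent_waveN.span_image_le_span_image_iff,
    linearIndependent_waveN.span_image_le_span_image_iff]
  exact and_iff_right fun kt ⟨_, hk, hz⟩ => mem_dualN_projLat hy0 hk hz

/-- `Π_{y0}(𝒳_ℒ) = 𝒳_𝓛̃` iff for each `k̃ ∈ 𝓛̃*` there is `z` with
`(k̃,z) ∈ ℒ*` and `z·y0 ∉ ℤ \ {0}`. -/
theorem stmt_5 (n : ℕ) (hn : 1 ≤ n) (b : Fin (n+1) → V1 n) (hb : LinearIndependent ℝ b)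
    (y0 : ℝ) (hy0 : 0 < y0) :
    Proj y0 '' (XL (latticeOf b) : Set (V1 n → ℂ)) =
        (XN (projLat (latticeOf b) y0) : Set ((Fin n → ℝ) → ℂ)) ↔
      ∀ kt ∈ dualN (projLat (latticeOf b) y0),
        ∃ z : ℝ, ((kt, z) : V1 n) ∈ dualLat (latticeOf b) ∧
          ∀ m : ℤ, z * y0 = (m : ℝ) → m = 0 :=
  stmt_5_general n b y0 hy0

end
end

section
/- Let ℒ ⊂ ℝ^{n+1} be a lattice, y0 > 0, and k ∈ ℒ*. Then there exist r ≥ 1 and elements δ_1 = id, δ_2, …, δ_r ∈ H_ℒ such that the sets S_{δ_i k}·(δ_i k) = {σ(δ_i k) : σ ∈ S_{δ_i k}} for i = 1,…,r are pairwise disjoint with union equal to the orbit H_ℒ·k = {δk : δ ∈ H_ℒ}; consequently the J̃-orbits J̃·P(δ_i k) for i = 1,…,r are pairwise disjoint and their union equals P(H_ℒ·k), so that P(H_ℒ·k) is a disjoint union of J̃-orbits. -/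
open MeasureTheory
open scoped Classical

noncomputable section

/-!
Points of the orbit `H_ℒ·k` lie in `ℒ*` and on the sphere of radius `|k|`, so their coordinates
against the lattice basis are bounded integers and the orbit is finite. `J̃` is a group, since
products and inverses of the maps `α₊`, `α₋` are again of this form; hence the `J̃`-orbits
partition `ℝⁿ`. For `p ∈ H_ℒ·k`, the set `S_p·p` is exactly the set of points of `H_ℒ·k` whose
projection lies in `J̃·P p`. Choosing one orbit point above each of the finitely many `J̃`-orbits
that meet `P(H_ℒ·k)`, starting with `k` itself, gives both decompositions.
-/

lemma exists_fin_lift_of_finite_image {G Q : Type*} (q : G → Q) {A : Set G}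
    (hA : (q '' A).Finite) {a₀ : G} (ha₀ : a₀ ∈ A) :
    ∃ m, ∃ hm : 0 < m, ∃ δ : Fin m → G, δ ⟨0, hm⟩ = a₀ ∧ (∀ i, δ i ∈ A) ∧
      Function.Injective (q ∘ δ) ∧ ∀ a ∈ A, ∃ i, q (δ i) = q a := by
  have := hA.to_subtype
  let t₀ : q '' A := ⟨q a₀, a₀, ha₀, rfl⟩
  have hm : 0 < Nat.card (q '' A) := @Nat.card_pos _ ⟨t₀⟩ _
  let e₀ := Finite.equivFin (q '' A)
  let e : Fin (Nat.card (q '' A)) ≃ q '' A := (Equiv.swap ⟨0, hm⟩ (e₀ t₀)).trans e₀.symm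
  have he : e ⟨0, hm⟩ = t₀ := by
    simp only [e, Equiv.trans_apply, Equiv.swap_apply_left, Equiv.symm_apply_apply]
  have hlift : ∀ t : q '' A, ∃ a ∈ A, q a = t ∧ (t = t₀ → a = a₀) := by
    intro t
    by_cases h : t = t₀
    · exact ⟨a₀, ha₀, by rw [h], fun _ => rfl⟩
    · obtain ⟨a, ha, hat⟩ := t.2
      exact ⟨a, ha, hat, fun h' => absurd h' h⟩
  choose lift hliftA hliftq hlift₀ using hlift
  refine ⟨_, hm, lift ∘ e, hlift₀ _ he, fun i => hliftA _, fun i j hij => ?_, fun a ha => ?_⟩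
  · simp only [Function.comp_apply, hliftq] at hij
    exact e.injective (Subtype.ext hij)
  · refine ⟨e.symm ⟨q a, a, ha, rfl⟩, ?_⟩
    simp only [Function.comp_apply, hliftq, Equiv.apply_symm_apply]

variable {n : ℕ}

lemma dot1_def (u v : V1 n) : dot1 u v = u.1 ⬝ᵥ v.1 + u.2 * v.2 := rfl

lemma dot1_self_eq_zero {u : V1 n} (h : dot1 u u = 0) : u = 0 := by
  have h₁ : 0 ≤ u.1 ⬝ᵥ u.1 := Finset.sum_nonneg fun i _ => mul_self_nonneg (u.1 i)
  have h₂ := mul_self_nonneg u.2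
  rw [dot1_def] at h
  exact Prod.ext (dotProduct_self_eq_zero.mp (by linarith)) (mul_self_eq_zero.mp (by linarith))

def dot1Bilin : LinearMap.BilinForm ℝ (V1 n) :=
  LinearMap.mk₂ ℝ dot1
    (fun a b c => by simp only [dot1_def, Prod.fst_add, Prod.snd_add, add_dotProduct]; ring)
    (fun r a c => by
      simp only [dot1_def, Prod.smul_fst, Prod.smul_snd, smul_dotProduct, smul_eq_mul]; ring)
    (fun a b c => by simp only [dot1_def, Prod.fst_add, Prod.snd_add, dotProduct_add]; ring)
    (fun r a c => by
      simp only [dot1_def, Prod.smul_fst, Prod.smul_snd, dotProduct_smul, smul_eq_mul]; ring)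

@[simp] lemma dot1Bilin_apply (u v : V1 n) : dot1Bilin u v = dot1 u v := rfl

lemma two_mul_abs_dot1_le (u v : V1 n) : 2 * |dot1 u v| ≤ dot1 u u + dot1 v v := by
  have hsub : 0 ≤ (u.1 - v.1) ⬝ᵥ (u.1 - v.1) := Finset.sum_nonneg fun i _ => mul_self_nonneg _
  have hadd : 0 ≤ (u.1 + v.1) ⬝ᵥ (u.1 + v.1) := Finset.sum_nonneg fun i _ => mul_self_nonneg _
  simp only [sub_dotProduct, dotProduct_sub, add_dotProduct, dotProduct_add,
    dotProduct_comm v.1 u.1] at hsub hadd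
  rw [dot1_def, dot1_def, dot1_def]
  rcases abs_cases (u.1 ⬝ᵥ v.1 + u.2 * v.2) with ⟨h, -⟩ | ⟨h, -⟩ <;> rw [h] <;>
    nlinarith [sq_nonneg (u.2 - v.2), sq_nonneg (u.2 + v.2)]

lemma eq_zero_of_forall_dot1_eq_zero {b : Fin (n+1) → V1 n} (hb : LinearIndependent ℝ b)
    {u : V1 n} (h : ∀ i, dot1 u (b i) = 0) : u = 0 := by
  have hspan := hb.span_eq_top_of_card_eq_finrank (by simp [Module.finrank_prod])
  have : dot1Bilin u = 0 := LinearMap.ext_on_range hspan (by simpa using h)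
  exact dot1_self_eq_zero (by simpa using LinearMap.congr_fun this u)

lemma mem_latticeOf_self (b : Fin (n+1) → V1 n) (i : Fin (n+1)) : b i ∈ latticeOf b :=
  ⟨Pi.single i 1, by simp [Pi.single_apply]⟩

lemma finite_dualLat_dot1_le {b : Fin (n+1) → V1 n} (hb : LinearIndependent ℝ b) (R : ℝ) :
    {p ∈ dualLat (latticeOf b) | dot1 p p ≤ R}.Finite := by
  set F : V1 n →ₗ[ℝ] Fin (n+1) → ℝ := LinearMap.pi fun i => dot1Bilin.flip (b i)
  have hF : Function.Injective F := by
    rw [← LinearMap.ker_eq_bot, LinearMap.ker_eq_bot']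
    exact fun u hu => eq_zero_of_forall_dot1_eq_zero hb fun i => congr_fun hu i
  set M : Fin (n+1) → ℤ := fun i => ⌈(R + dot1 (b i) (b i)) / 2⌉
  refine Set.Finite.of_finite_image (((Set.finite_Icc (-M) M).image
    fun z i => (z i : ℝ)).subset ?_) hF.injOn
  rintro _ ⟨p, ⟨hp, hpR⟩, rfl⟩
  choose z hz using fun i => hp (b i) (mem_latticeOf_self b i)
  have hzM : ∀ i, -M i ≤ z i ∧ z i ≤ M i := fun i => by
    have hle : 2 * |(z i : ℝ)| ≤ R + dot1 (b i) (b i) := by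
      rw [← hz i]; linarith [two_mul_abs_dot1_le p (b i)]
    have hM : (R + dot1 (b i) (b i)) / 2 ≤ M i := Int.le_ceil _
    have habs := abs_le.mp (show |(z i : ℝ)| ≤ M i by linarith)
    exact ⟨by exact_mod_cast habs.1, by exact_mod_cast habs.2⟩
  exact ⟨z, ⟨fun i => (hzM i).1, fun i => (hzM i).2⟩, funext fun i => (hz i).symm⟩

def holSubgroup (L : Set (V1 n)) : Subgroup (V1 n ≃ₗ[ℝ] V1 n) where
  carrier := HolL L
  one_mem' := ⟨fun _ _ => rfl, Set.image_id L⟩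
  mul_mem' {γ δ} hγ hδ := ⟨fun a c => (hγ.1 _ _).trans (hδ.1 a c),
    by rw [show ⇑(γ * δ) = γ ∘ δ from rfl, Set.image_comp, hδ.2, hγ.2]⟩
  inv_mem' {γ} hγ := ⟨fun a c => by simpa using (hγ.1 (γ.symm a) (γ.symm c)).symm,
    by simpa [hγ.2] using γ.toEquiv.symm_image_image L⟩

lemma HOrb_eq_orbit (L : Set (V1 n)) (k : V1 n) :
    HOrb L k = MulAction.orbit (holSubgroup L) k := by
  ext p
  constructor
  · rintro ⟨δ, hδ, rfl⟩
    exact ⟨⟨δ, hδ⟩, rfl⟩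
  · rintro ⟨⟨δ, hδ⟩, rfl⟩
    exact ⟨δ, hδ, rfl⟩

lemma HOrb_apply_eq {L : Set (V1 n)} {δ : V1 n ≃ₗ[ℝ] V1 n} (hδ : δ ∈ HolL L) (k : V1 n) :
    HOrb L (δ k) = HOrb L k := by
  rw [HOrb_eq_orbit, HOrb_eq_orbit]
  exact MulAction.orbit_smul (⟨δ, hδ⟩ : holSubgroup L) k

lemma HOrb_finite {b : Fin (n+1) → V1 n} (hb : LinearIndependent ℝ b) {k : V1 n}
    (hk : k ∈ dualLat (latticeOf b)) : (HOrb (latticeOf b) k).Finite := by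
  refine (finite_dualLat_dot1_le hb (dot1 k k)).subset ?_
  rintro _ ⟨δ, hδ, rfl⟩
  refine ⟨fun l hl => ?_, (hδ.1 k k).le⟩
  obtain ⟨l', hl', rfl⟩ := hδ.2.symm ▸ hl
  rw [hδ.1]
  exact hk l' hl'

section

variable (α β : (Fin n → ℝ) ≃ₗ[ℝ] (Fin n → ℝ))

lemma aPlus_mul : aPlus (α * β) = aPlus α * aPlus β := rfl

lemma aPlus_mul_aMinus : aPlus α * aMinus β = aMinus (α * β) := rfl

lemma aMinus_mul_aPlus : aMinus α * aPlus β = aMinus (α * β) := rfl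

lemma aMinus_mul_aMinus : aMinus α * aMinus β = aPlus (α * β) :=
  LinearEquiv.ext fun p => Prod.ext rfl (neg_neg p.2)

lemma aPlus_inv : aPlus α⁻¹ = (aPlus α)⁻¹ := rfl

lemma aMinus_inv : aMinus α⁻¹ = (aMinus α)⁻¹ := rfl

end

def jtSubgroup (L : Set (V1 n)) (y0 : ℝ) : Subgroup ((Fin n → ℝ) ≃ₗ[ℝ] (Fin n → ℝ)) where
  carrier := Jt L y0
  one_mem' := ⟨fun _ _ => rfl, Or.inl (holSubgroup L).one_mem⟩
  mul_mem' := by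
    rintro α β ⟨hα, h₁ | ⟨hy, h₁⟩⟩ ⟨hβ, h₂ | ⟨hy', h₂⟩⟩ <;>
      refine ⟨fun a c => (hα _ _).trans (hβ a c), ?_⟩
    · exact Or.inl (aPlus_mul α β ▸ (holSubgroup L).mul_mem h₁ h₂)
    · exact Or.inr ⟨hy', aPlus_mul_aMinus α β ▸ (holSubgroup L).mul_mem h₁ h₂⟩
    · exact Or.inr ⟨hy, aMinus_mul_aPlus α β ▸ (holSubgroup L).mul_mem h₁ h₂⟩
    · exact Or.inl (aMinus_mul_aMinus α β ▸ (holSubgroup L).mul_mem h₁ h₂)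
  inv_mem' := by
    rintro α ⟨hα, h | ⟨hy, h⟩⟩ <;>
      refine ⟨fun a c => by simpa using (hα (α.symm a) (α.symm c)).symm, ?_⟩
    · exact Or.inl (aPlus_inv α ▸ (holSubgroup L).inv_mem h)
    · exact Or.inr ⟨hy, aMinus_inv α ▸ (holSubgroup L).inv_mem h⟩

lemma JOrb_eq_orbit (L : Set (V1 n)) (y0 : ℝ) (u : Fin n → ℝ) :
    JOrb L y0 u = MulAction.orbit (jtSubgroup L y0) u := by
  ext x
  constructor
  · rintro ⟨α, hα, rfl⟩
    exact ⟨⟨α, hα⟩, rfl⟩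
  · rintro ⟨⟨α, hα⟩, rfl⟩
    exact ⟨α, hα, rfl⟩

variable {L : Set (V1 n)} {y0 : ℝ}

lemma mem_JOrb_self (u : Fin n → ℝ) : u ∈ JOrb L y0 u := by
  rw [JOrb_eq_orbit]
  exact MulAction.mem_orbit_self u

lemma JOrb_eq_of_mem {u v : Fin n → ℝ} (h : v ∈ JOrb L y0 u) : JOrb L y0 v = JOrb L y0 u := by
  simp only [JOrb_eq_orbit] at h ⊢
  exact MulAction.orbit_eq_iff.mpr h

lemma exists_holL_fst_eq {α : (Fin n → ℝ) ≃ₗ[ℝ] (Fin n → ℝ)} (hα : α ∈ Jt L y0) :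
    ∃ ε ∈ HolL L, ∀ p : V1 n, (ε p).1 = α p.1 := by
  rcases hα.2 with h | ⟨-, h⟩
  exacts [⟨_, h, fun _ => rfl⟩, ⟨_, h, fun _ => rfl⟩]

lemma JOrb_subset_fst_HOrb (p : V1 n) : JOrb L y0 p.1 ⊆ Prod.fst '' HOrb L p := by
  rintro _ ⟨α, hα, rfl⟩
  obtain ⟨ε, hε, hεα⟩ := exists_holL_fst_eq hα
  exact ⟨ε p, ⟨ε, hε, rfl⟩, hεα p⟩

lemma image_Sk_eq (p : V1 n) :
    (fun σ : V1 n ≃ₗ[ℝ] V1 n => σ p) '' Sk L y0 p = {q ∈ HOrb L p | q.1 ∈ JOrb L y0 p.1} := by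
  ext q
  simp only [Sk, Jset, Set.mem_iUnion, Set.mem_image, Set.mem_ofPred_eq, HOrb, JOrb]
  constructor
  · rintro ⟨σ, ⟨α, hα, hσ, h⟩, rfl⟩
    exact ⟨⟨σ, hσ, rfl⟩, α, hα, h.symm⟩
  · rintro ⟨⟨σ, hσ, rfl⟩, α, hα, h⟩
    exact ⟨σ, ⟨α, hα, hσ, h.symm⟩, rfl⟩

theorem stmt_13_general (n : ℕ) (b : Fin (n+1) → V1 n) (hb : LinearIndependent ℝ b)
    (y0 : ℝ) (k : V1 n) (hk : k ∈ dualLat (latticeOf b)) :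
    ∃ r : ℕ, ∃ hr : 0 < r, ∃ δ : Fin r → (V1 n ≃ₗ[ℝ] V1 n),
      δ ⟨0, hr⟩ = 1 ∧
      (∀ i, δ i ∈ HolL (latticeOf b)) ∧
      (∀ i j, i ≠ j →
        ((fun σ : V1 n ≃ₗ[ℝ] V1 n => σ (δ i k)) ''
            Sk (latticeOf b) y0 (δ i k)) ∩
          ((fun σ : V1 n ≃ₗ[ℝ] V1 n => σ (δ j k)) ''
            Sk (latticeOf b) y0 (δ j k)) = ∅) ∧
      (⋃ i, (fun σ : V1 n ≃ₗ[ℝ] V1 n => σ (δ i k)) ''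
          Sk (latticeOf b) y0 (δ i k)) = HOrb (latticeOf b) k ∧
      (∀ i j, i ≠ j →
        JOrb (latticeOf b) y0 ((δ i k).1) ∩ JOrb (latticeOf b) y0 ((δ j k).1) = ∅) ∧
      (⋃ i, JOrb (latticeOf b) y0 ((δ i k).1)) =
        Prod.fst '' HOrb (latticeOf b) k := by
  set L := latticeOf b
  have hfin : ((fun σ : V1 n ≃ₗ[ℝ] V1 n => JOrb L y0 (σ k).1) '' HolL L).Finite := by
    simpa only [HOrb, Set.image_image] using (HOrb_finite hb hk).image fun p => JOrb L y0 p.1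
  obtain ⟨r, hr, δ, hδ₀, hδH, hδinj, hδcover⟩ :=
    exists_fin_lift_of_finite_image _ hfin (holSubgroup L).one_mem
  have hS : ∀ i, (fun σ : V1 n ≃ₗ[ℝ] V1 n => σ (δ i k)) '' Sk L y0 (δ i k) =
      {q ∈ HOrb L k | q.1 ∈ JOrb L y0 (δ i k).1} := fun i => by
    rw [image_Sk_eq, HOrb_apply_eq (hδH i)]
  have hdisj : ∀ i j, i ≠ j → JOrb L y0 (δ i k).1 ∩ JOrb L y0 (δ j k).1 = ∅ :=
    fun i j hij => Set.eq_empty_of_forall_notMem fun x hx =>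
      hij (hδinj ((JOrb_eq_of_mem hx.1).symm.trans (JOrb_eq_of_mem hx.2)))
  have hcover : ∀ q ∈ HOrb L k, ∃ i, q.1 ∈ JOrb L y0 (δ i k).1 := by
    rintro _ ⟨σ, hσ, rfl⟩
    obtain ⟨i, hi⟩ := hδcover σ hσ
    exact ⟨i, hi ▸ mem_JOrb_self _⟩
  refine ⟨r, hr, δ, hδ₀, hδH, fun i j hij => ?_, ?_, hdisj, ?_⟩
  · rw [hS, hS]
    exact Set.eq_empty_of_forall_notMem fun q hq => (hdisj i j hij).subset ⟨hq.1.2, hq.2.2⟩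
  · simp only [hS]
    exact subset_antisymm (Set.iUnion_subset fun i => Set.sep_subset _ _)
      fun q hq => Set.mem_iUnion.mpr ((hcover q hq).imp fun i hi => ⟨hq, hi⟩)
  · refine subset_antisymm (Set.iUnion_subset fun i => ?_) fun _ ⟨q, hq, hx⟩ => ?_
    · rw [← HOrb_apply_eq (hδH i)]
      exact JOrb_subset_fst_HOrb _
    · exact Set.mem_iUnion.mpr (hx ▸ hcover q hq)

/-- the orbit `H_ℒ·k` decomposes as a disjoint union of sets
`S_{δᵢk}·(δᵢk)`, and consequently `P(H_ℒ·k)` is a disjoint union of `J̃`-orbits. -/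
theorem stmt_13 (n : ℕ) (hn : 1 ≤ n) (b : Fin (n+1) → V1 n) (hb : LinearIndependent ℝ b)
    (y0 : ℝ) (hy0 : 0 < y0) (k : V1 n) (hk : k ∈ dualLat (latticeOf b)) :
    ∃ r : ℕ, ∃ hr : 0 < r, ∃ δ : Fin r → (V1 n ≃ₗ[ℝ] V1 n),
      δ ⟨0, hr⟩ = 1 ∧
      (∀ i, δ i ∈ HolL (latticeOf b)) ∧
      (∀ i j, i ≠ j →
        ((fun σ : V1 n ≃ₗ[ℝ] V1 n => σ (δ i k)) ''
            Sk (latticeOf b) y0 (δ i k)) ∩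
          ((fun σ : V1 n ≃ₗ[ℝ] V1 n => σ (δ j k)) ''
            Sk (latticeOf b) y0 (δ j k)) = ∅) ∧
      (⋃ i, (fun σ : V1 n ≃ₗ[ℝ] V1 n => σ (δ i k)) ''
          Sk (latticeOf b) y0 (δ i k)) = HOrb (latticeOf b) k ∧
      (∀ i j, i ≠ j →
        JOrb (latticeOf b) y0 ((δ i k).1) ∩ JOrb (latticeOf b) y0 ((δ j k).1) = ∅) ∧
      (⋃ i, JOrb (latticeOf b) y0 ((δ i k).1)) =
        Prod.fst '' HOrb (latticeOf b) k :=
  stmt_13_general n b hb y0 k hk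

end
end
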